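/- Under the FWAL iteration hypotheses — β₀ > 0, β_t = β₀√(t+1), η_t = 2/(t+1), W₁ ∈ Δ^p, y₁ ∈ ℝ^d, G_t = C + 𝒜ᵀy_t + β_t 𝒜ᵀ(𝒜W_t − v), H_t ∈ Δ^p a minimizer of W ↦ Tr(G_t W) over Δ^p, W_{t+1} = (1 − η_t) W_t + η_t H_t, g_t = 𝒜W_{t+1} − v, y_{t+1} = y_t + γ_t g_t with γ_t ≥ 0 satisfying γ_t‖g_t‖² ≤ β_t η_t² p² ‖𝒜‖², and W⋆ ∈ Δ^p with 𝒜W⋆ = v — the augmented Lagrangian value satisfies, for every t ≥ 1, L_{β_t}(W_{t+1}; y_{t+1}) − Tr(C W⋆) ≤ 6 β₀ ‖𝒜‖² p² / √(t+1). -/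

import Mathlib

open scoped BigOperators

noncomputable section

/-- A binary (0/1-valued) vector. -/
def binaryVec {ι : Type*} (x : ι → ℝ) : Prop := ∀ i, x i = 0 ∨ x i = 1

/-- `Δ^p`: the convex hull of the rank-one binary matrices `x xᵀ`, `x ∈ {0,1}^p`. -/
def CPdelta (ι : Type*) [Fintype ι] : Set (Matrix ι ι ℝ) :=
  convexHull ℝ {M | ∃ x : ι → ℝ, binaryVec x ∧ M = Matrix.vecMulVec x x}

/-- Frobenius inner product of matrices. -/
def frobInner {ι : Type*} [Fintype ι] (A B : Matrix ι ι ℝ) : ℝ := ∑ i, ∑ j, A i j * B i j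

/-- Frobenius norm of a matrix. -/
def frobNorm {ι : Type*} [Fintype ι] (A : Matrix ι ι ℝ) : ℝ :=
  Real.sqrt (∑ i, ∑ j, (A i j) ^ 2)

/-- Operator norm `‖𝒜‖ = sup {‖𝒜X‖ : ‖X‖_F ≤ 1}` of a linear map from matrices
(with the Frobenius norm) to `ℝ^d` (with the Euclidean norm). -/
def opNorm {p d : ℕ} (A : Matrix (Fin p) (Fin p) ℝ →ₗ[ℝ] EuclideanSpace ℝ (Fin d)) : ℝ :=
  sSup {r : ℝ | ∃ X : Matrix (Fin p) (Fin p) ℝ, frobNorm X ≤ 1 ∧ r = ‖A X‖}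

/-- The augmented Lagrangian `L_β(W; y) = Tr(C W) + yᵀ(𝒜W - v) + (β/2)‖𝒜W - v‖²`. -/
def Lag {p d : ℕ} (C : Matrix (Fin p) (Fin p) ℝ)
    (A : Matrix (Fin p) (Fin p) ℝ →ₗ[ℝ] EuclideanSpace ℝ (Fin d))
    (v : EuclideanSpace ℝ (Fin d)) (β : ℝ)
    (W : Matrix (Fin p) (Fin p) ℝ) (y : EuclideanSpace ℝ (Fin d)) : ℝ :=
  Matrix.trace (C * W) + (∑ i, y i * (A W - v) i) + β / 2 * ‖A W - v‖ ^ 2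

/-!
Let `Eₜ = L_{β₀√t}(Wₜ; yₜ) - Tr(C W⋆)`. Expanding the augmented Lagrangian along the
Frank–Wolfe segment, using that `Hₜ` minimizes its linearization and comparing with the
feasible point `W⋆` (where the Lagrangian is `Tr(C W⋆)`), gives
`Eₜ₊₁ ≤ (1 - ηₜ) Eₜ + ηₜ² βₜ p² ‖𝒜‖² / 2`: the growth of the penalty from `β₀√t` to `βₜ` is
absorbed by the `-ηₜ βₜ ‖𝒜Wₜ - v‖² / 2` term since `βₜ - β₀√t ≤ ηₜ βₜ`, and `p ‖𝒜‖` bounds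
`‖𝒜(X - Y)‖` on `Δ^p`, whose entries lie in `[0, 1]`. The dual step adds at most
`βₜ ηₜ² p² ‖𝒜‖²`, and with `ηₜ = 2/(t+1)` the recursion
`Eₜ₊₁ ≤ (1 - ηₜ) Eₜ + 6 β₀ p² ‖𝒜‖² / (t+1)^{3/2}` gives the rate `6 β₀ p² ‖𝒜‖² / √(t+1)`
by induction, the first step having `η₁ = 1`.
-/

section CPdelta

variable {ι : Type*} [Fintype ι]

lemma convex_CPdelta : Convex ℝ (CPdelta ι) := convex_convexHull ℝ _

lemma isSymm_of_mem_CPdelta {M : Matrix ι ι ℝ} (hM : M ∈ CPdelta ι) : M.IsSymm := by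
  refine convexHull_min ?_ ?_ hM (t := {M : Matrix ι ι ℝ | M.IsSymm})
  · rintro _ ⟨x, -, rfl⟩
    exact Matrix.transpose_vecMulVec x x
  · intro X hX Y hY a b _ _ _
    exact (hX.smul a).add (hY.smul b)

lemma entry_mem_Icc_of_mem_CPdelta {M : Matrix ι ι ℝ} (hM : M ∈ CPdelta ι) (i j : ι) :
    M i j ∈ Set.Icc (0 : ℝ) 1 := by
  refine convexHull_min ?_ ?_ hM (t := {M : Matrix ι ι ℝ | M i j ∈ Set.Icc (0 : ℝ) 1})
  · rintro _ ⟨x, hx, rfl⟩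
    rcases hx i with hi | hi <;> rcases hx j with hj | hj <;>
      simp [Matrix.vecMulVec_apply, hi, hj]
  · intro X hX Y hY a b ha hb hab
    exact convex_Icc (0 : ℝ) 1 hX hY ha hb hab

lemma frobNorm_sub_le_card {X Y : Matrix ι ι ℝ} (hX : X ∈ CPdelta ι) (hY : Y ∈ CPdelta ι) :
    frobNorm (X - Y) ≤ Fintype.card ι := by
  have hentry (i j : ι) : (X i j - Y i j) ^ 2 ≤ 1 := by
    obtain ⟨hX₀, hX₁⟩ := entry_mem_Icc_of_mem_CPdelta hX i j
    obtain ⟨hY₀, hY₁⟩ := entry_mem_Icc_of_mem_CPdelta hY i j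
    nlinarith
  calc frobNorm (X - Y) ≤ Real.sqrt (∑ _i : ι, ∑ _j : ι, (1 : ℝ)) :=
        Real.sqrt_le_sqrt (Finset.sum_le_sum fun i _ => Finset.sum_le_sum fun j _ => hentry i j)
    _ = Fintype.card ι := by
        simp only [Finset.sum_const, Finset.card_univ, nsmul_eq_mul, mul_one]
        exact Real.sqrt_mul_self (Nat.cast_nonneg _)

end CPdelta

lemma Convex.frankWolfe_iterate_mem {E : Type*} [AddCommGroup E] [Module ℝ E] {s : Set E}
    (hs : Convex ℝ s) {W H : ℕ → E} (hW₁ : W 1 ∈ s) (hH : ∀ t, 1 ≤ t → H t ∈ s)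
    (hW : ∀ t, 1 ≤ t → W (t + 1) = (1 - 2 / ((t : ℝ) + 1)) • W t + (2 / ((t : ℝ) + 1)) • H t) :
    ∀ t, 1 ≤ t → W t ∈ s := by
  intro t ht
  induction t, ht using Nat.le_induction with
  | base => exact hW₁
  | succ n hn ih =>
    have hη : 2 / ((n : ℝ) + 1) ≤ 1 := by
      rw [div_le_one (by positivity)]
      linarith [(by exact_mod_cast hn : (1 : ℝ) ≤ n)]
    rw [hW n hn]
    exact hs ih (hH n hn) (by linarith) (by positivity) (by ring)

section OperatorNorm

attribute [local instance] Matrix.frobeniusNormedAddCommGroup Matrix.frobeniusNormedSpace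

variable {p d : ℕ} (A : Matrix (Fin p) (Fin p) ℝ →ₗ[ℝ] EuclideanSpace ℝ (Fin d))

lemma frobNorm_eq_norm (X : Matrix (Fin p) (Fin p) ℝ) : frobNorm X = ‖X‖ := by
  rw [Matrix.frobenius_norm_def, frobNorm, Real.sqrt_eq_rpow]
  simp

lemma opNorm_bddAbove :
    BddAbove {r : ℝ | ∃ X : Matrix (Fin p) (Fin p) ℝ, frobNorm X ≤ 1 ∧ r = ‖A X‖} := by
  obtain ⟨K, hK, hAK⟩ := (LinearMap.toContinuousLinearMap A).bound
  refine ⟨K, ?_⟩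
  rintro _ ⟨X, hX, rfl⟩
  rw [frobNorm_eq_norm] at hX
  exact (hAK X).trans (mul_le_of_le_one_right hK.le hX)

lemma norm_apply_le_opNorm_mul (X : Matrix (Fin p) (Fin p) ℝ) :
    ‖A X‖ ≤ opNorm A * frobNorm X := by
  rw [frobNorm_eq_norm]
  rcases eq_or_ne X 0 with rfl | hX
  · simp
  have hXpos : 0 < ‖X‖ := norm_pos_iff.mpr hX
  have hunit : ‖A (‖X‖⁻¹ • X)‖ ≤ opNorm A :=
    le_csSup (opNorm_bddAbove A)
      ⟨‖X‖⁻¹ • X, by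
        rw [frobNorm_eq_norm, norm_smul, norm_inv, norm_norm, inv_mul_cancel₀ hXpos.ne'], rfl⟩
  rw [map_smul, norm_smul, norm_inv, norm_norm, inv_mul_le_iff₀ hXpos] at hunit
  linarith

lemma opNorm_nonneg : 0 ≤ opNorm A :=
  le_csSup (opNorm_bddAbove A) ⟨0, by simp [frobNorm], by simp⟩

lemma norm_apply_sub_le_of_mem_CPdelta {X Y : Matrix (Fin p) (Fin p) ℝ}
    (hX : X ∈ CPdelta (Fin p)) (hY : Y ∈ CPdelta (Fin p)) :
    ‖A (X - Y)‖ ≤ p * opNorm A :=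
  calc ‖A (X - Y)‖ ≤ opNorm A * frobNorm (X - Y) := norm_apply_le_opNorm_mul A _
    _ ≤ opNorm A * p := by
        simpa using mul_le_mul_of_nonneg_left (frobNorm_sub_le_card hX hY) (opNorm_nonneg A)
    _ = p * opNorm A := mul_comm _ _

end OperatorNorm

lemma Matrix.IsSymm.trace_mul_eq_frobInner {ι : Type*} [Fintype ι] {D : Matrix ι ι ℝ}
    (hD : D.IsSymm) (M : Matrix ι ι ℝ) : Matrix.trace (M * D) = frobInner M D := by
  simp only [Matrix.trace, Matrix.diag, Matrix.mul_apply, frobInner]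
  exact Finset.sum_congr rfl fun i _ => Finset.sum_congr rfl fun j _ => by rw [hD.apply i j]

section Lagrangian

variable {p d : ℕ} {C : Matrix (Fin p) (Fin p) ℝ}
  {A : Matrix (Fin p) (Fin p) ℝ →ₗ[ℝ] EuclideanSpace ℝ (Fin d)}
  {Aadj : EuclideanSpace ℝ (Fin d) →ₗ[ℝ] Matrix (Fin p) (Fin p) ℝ} {v : EuclideanSpace ℝ (Fin d)}

lemma Lag_eq_inner (β : ℝ) (W : Matrix (Fin p) (Fin p) ℝ) (y : EuclideanSpace ℝ (Fin d)) :
    Lag C A v β W y = Matrix.trace (C * W) + inner ℝ y (A W - v) + β / 2 * ‖A W - v‖ ^ 2 := by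
  simp [Lag, PiLp.inner_apply, mul_comm]

lemma trace_adjoint_mul_of_isSymm
    (hadj : ∀ (X : Matrix (Fin p) (Fin p) ℝ) (z : EuclideanSpace ℝ (Fin d)),
      (∑ i, A X i * z i) = frobInner (Aadj z) X)
    {D : Matrix (Fin p) (Fin p) ℝ} (hD : D.IsSymm) (z : EuclideanSpace ℝ (Fin d)) :
    Matrix.trace (Aadj z * D) = inner ℝ z (A D) := by
  rw [hD.trace_mul_eq_frobInner, ← hadj, real_inner_comm]
  simp [PiLp.inner_apply, mul_comm]

lemma Lag_add_smul
    (hadj : ∀ (X : Matrix (Fin p) (Fin p) ℝ) (z : EuclideanSpace ℝ (Fin d)),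
      (∑ i, A X i * z i) = frobInner (Aadj z) X)
    {D : Matrix (Fin p) (Fin p) ℝ} (hD : D.IsSymm) (β η : ℝ)
    (W : Matrix (Fin p) (Fin p) ℝ) (y : EuclideanSpace ℝ (Fin d)) :
    Lag C A v β (W + η • D) y = Lag C A v β W y
      + η * Matrix.trace ((C + Aadj y + β • Aadj (A W - v)) * D) + η ^ 2 * (β / 2) * ‖A D‖ ^ 2 := by
  have hres : A (W + η • D) - v = (A W - v) + η • A D := by
    rw [map_add, map_smul]; abel
  simp only [Lag_eq_inner, hres, Matrix.mul_add, Matrix.add_mul, Matrix.mul_smul,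
    Matrix.smul_mul, Matrix.trace_add, Matrix.trace_smul, smul_eq_mul,
    trace_adjoint_mul_of_isSymm hadj hD, inner_add_right, real_inner_smul_right, norm_add_sq_real,
    norm_smul, Real.norm_eq_abs, mul_pow, sq_abs]
  ring

lemma Lag_of_map_eq (β : ℝ) {W : Matrix (Fin p) (Fin p) ℝ} (hW : A W = v)
    (y : EuclideanSpace ℝ (Fin d)) : Lag C A v β W y = Matrix.trace (C * W) := by
  simp [Lag, hW]

lemma Lag_eq_Lag_add (β β' : ℝ) (W : Matrix (Fin p) (Fin p) ℝ) (y : EuclideanSpace ℝ (Fin d)) :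
    Lag C A v β' W y = Lag C A v β W y + (β' - β) / 2 * ‖A W - v‖ ^ 2 := by
  simp only [Lag]; ring

lemma Lag_dual_update (β γ : ℝ) (W : Matrix (Fin p) (Fin p) ℝ) (y : EuclideanSpace ℝ (Fin d)) :
    Lag C A v β W (y + γ • (A W - v)) = Lag C A v β W y + γ * ‖A W - v‖ ^ 2 := by
  simp only [Lag_eq_inner, inner_add_left, real_inner_smul_left, real_inner_self_eq_norm_sq]
  ring

end Lagrangian

section Step

variable {p d : ℕ} {C : Matrix (Fin p) (Fin p) ℝ}
  {A : Matrix (Fin p) (Fin p) ℝ →ₗ[ℝ] EuclideanSpace ℝ (Fin d)}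
  {Aadj : EuclideanSpace ℝ (Fin d) →ₗ[ℝ] Matrix (Fin p) (Fin p) ℝ} {v : EuclideanSpace ℝ (Fin d)}

lemma Lag_frankWolfe_step_sub_le
    (hadj : ∀ (X : Matrix (Fin p) (Fin p) ℝ) (z : EuclideanSpace ℝ (Fin d)),
      (∑ i, A X i * z i) = frobInner (Aadj z) X)
    {β β' η : ℝ} (hββ' : β ≤ β') (hη : 0 ≤ η) (hgap : β' - β ≤ η * β')
    {W H Wstar : Matrix (Fin p) (Fin p) ℝ} {y : EuclideanSpace ℝ (Fin d)}
    (hW : W ∈ CPdelta (Fin p)) (hH : H ∈ CPdelta (Fin p)) (hWstar : Wstar ∈ CPdelta (Fin p))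
    (hfeas : A Wstar = v)
    (hHmin : Matrix.trace ((C + Aadj y + β' • Aadj (A W - v)) * H) ≤
      Matrix.trace ((C + Aadj y + β' • Aadj (A W - v)) * Wstar)) :
    Lag C A v β' ((1 - η) • W + η • H) y - Matrix.trace (C * Wstar) ≤
      (1 - η) * (Lag C A v β W y - Matrix.trace (C * Wstar)) +
        η ^ 2 * (β' / 2) * ((p : ℝ) ^ 2 * opNorm A ^ 2) := by
  set G := C + Aadj y + β' • Aadj (A W - v)
  set fstar := Matrix.trace (C * Wstar)
  set q := ‖A W - v‖ ^ 2
  have hsymm {X : Matrix (Fin p) (Fin p) ℝ} (hX : X ∈ CPdelta (Fin p)) : (X - W).IsSymm :=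
    (isSymm_of_mem_CPdelta hX).sub (isSymm_of_mem_CPdelta hW)
  have hexpand : Lag C A v β' ((1 - η) • W + η • H) y =
      Lag C A v β' W y + η * Matrix.trace (G * (H - W)) + η ^ 2 * (β' / 2) * ‖A (H - W)‖ ^ 2 := by
    rw [← Lag_add_smul hadj (hsymm hH)]
    congr 1
    module
  -- the expansion towards the feasible point `W⋆` expresses the linear term through `f⋆`
  have hstar : fstar = Lag C A v β' W y + Matrix.trace (G * (Wstar - W)) + (β' / 2) * q := by
    have hres : A (Wstar - W) = -(A W - v) := by rw [map_sub, hfeas, neg_sub]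
    have h := Lag_add_smul hadj (hsymm hWstar) β' 1 W y (C := C) (v := v)
    rw [one_smul, add_sub_cancel, Lag_of_map_eq β' hfeas, hres, norm_neg, one_mul, one_pow,
      one_mul] at h
    exact h
  have hlinear : Matrix.trace (G * (H - W)) ≤ Matrix.trace (G * (Wstar - W)) := by
    simpa only [Matrix.mul_sub, Matrix.trace_sub] using sub_le_sub_right hHmin _
  have hcurv : ‖A (H - W)‖ ^ 2 ≤ (p : ℝ) ^ 2 * opNorm A ^ 2 := by
    rw [← mul_pow]
    exact pow_le_pow_left₀ (norm_nonneg _) (norm_apply_sub_le_of_mem_CPdelta A hH hW) 2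
  have hpenalty := Lag_eq_Lag_add (C := C) (A := A) (v := v) β β' W y
  have hq : 0 ≤ q := sq_nonneg _
  have hβ' : 0 ≤ η ^ 2 * (β' / 2) := by nlinarith
  have hcoef : (1 - η) * (β' - β) - η * β' ≤ 0 := by nlinarith
  rw [hexpand]
  nlinarith [mul_le_mul_of_nonneg_left hlinear hη, mul_le_mul_of_nonneg_left hcurv hβ',
    mul_nonpos_of_nonpos_of_nonneg hcoef hq]

lemma Lag_fwal_step_sub_le
    (hadj : ∀ (X : Matrix (Fin p) (Fin p) ℝ) (z : EuclideanSpace ℝ (Fin d)),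
      (∑ i, A X i * z i) = frobInner (Aadj z) X)
    {β β' η γ : ℝ} (hββ' : β ≤ β') (hη : 0 ≤ η) (hgap : β' - β ≤ η * β')
    {W H W' Wstar : Matrix (Fin p) (Fin p) ℝ} {y y' : EuclideanSpace ℝ (Fin d)}
    (hW : W ∈ CPdelta (Fin p)) (hH : H ∈ CPdelta (Fin p)) (hWstar : Wstar ∈ CPdelta (Fin p))
    (hfeas : A Wstar = v)
    (hHmin : Matrix.trace ((C + Aadj y + β' • Aadj (A W - v)) * H) ≤
      Matrix.trace ((C + Aadj y + β' • Aadj (A W - v)) * Wstar))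
    (hW' : W' = (1 - η) • W + η • H)
    (hγ : γ * ‖A W' - v‖ ^ 2 ≤ β' * η ^ 2 * (p : ℝ) ^ 2 * opNorm A ^ 2)
    (hy' : y' = y + γ • (A W' - v)) :
    Lag C A v β' W' y' - Matrix.trace (C * Wstar) ≤
      (1 - η) * (Lag C A v β W y - Matrix.trace (C * Wstar)) +
        3 / 2 * (β' * η ^ 2 * (p : ℝ) ^ 2 * opNorm A ^ 2) := by
  have hprimal := Lag_frankWolfe_step_sub_le hadj hββ' hη hgap hW hH hWstar hfeas hHmin
  subst hW' hy'
  rw [Lag_dual_update]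
  linarith

end Step

lemma sqrt_add_one_sub_sqrt_le {x : ℝ} (hx : 0 ≤ x) :
    Real.sqrt (x + 1) - Real.sqrt x ≤ 2 / (x + 1) * Real.sqrt (x + 1) := by
  set s := Real.sqrt (x + 1)
  set r := Real.sqrt x
  have hs : s ^ 2 = x + 1 := Real.sq_sqrt (by linarith)
  have hr : r ^ 2 = x := Real.sq_sqrt hx
  have hrs : r ≤ s := Real.sqrt_le_sqrt (by linarith)
  have hs₀ : 0 < s := Real.sqrt_pos.mpr (by linarith)
  have h : (s - r) * s ≤ 1 := by nlinarith [Real.sqrt_nonneg x]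
  rw [div_mul_eq_mul_div, le_div_iff₀ (by linarith), ← hs]
  nlinarith [mul_le_mul_of_nonneg_right h hs₀.le]

lemma frankWolfe_rate_step {z : ℝ} (hz : 1 ≤ z) :
    (1 - 2 / (z + 1)) / Real.sqrt z + 1 / ((z + 1) * Real.sqrt (z + 1)) ≤
      1 / Real.sqrt (z + 1) := by
  set a := Real.sqrt z
  set b := Real.sqrt (z + 1)
  have ha : a ^ 2 = z := Real.sq_sqrt (by linarith)
  have hb : b ^ 2 = z + 1 := Real.sq_sqrt (by linarith)
  have ha₀ : 0 < a := Real.sqrt_pos.mpr (by linarith)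
  have hb₀ : 0 < b := Real.sqrt_pos.mpr (by linarith)
  -- `((z - 1) b)² = (z - 1)² (z + 1) ≤ z³ = (z a)²`
  have hkey : (z - 1) * b ≤ z * a := by
    refine (pow_le_pow_iff_left₀ (by nlinarith) (by positivity) two_ne_zero).mp ?_
    rw [mul_pow, mul_pow, ha, hb]
    nlinarith
  rw [one_sub_div (by linarith), div_div, div_add_div _ _ (by positivity) (by positivity),
    div_le_div_iff₀ (by positivity) hb₀]
  nlinarith [mul_le_mul_of_nonneg_left hkey (by positivity : 0 ≤ (z + 1) * b)]

lemma le_div_sqrt_of_le_rate_recursion {e : ℕ → ℝ} {K : ℝ} (hK : 0 ≤ K)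
    (he : ∀ t : ℕ, 1 ≤ t →
      e (t + 1) ≤ (1 - 2 / ((t : ℝ) + 1)) * e t + K / (((t : ℝ) + 1) * Real.sqrt ((t : ℝ) + 1))) :
    ∀ t : ℕ, 1 ≤ t → e (t + 1) ≤ K / Real.sqrt ((t : ℝ) + 1) := by
  intro t ht
  induction t, ht using Nat.le_induction with
  | base =>
    have h := he 1 le_rfl
    norm_num at h ⊢
    refine h.trans (div_le_div_of_nonneg_left hK (by positivity) ?_)
    linarith [Real.sqrt_nonneg 2]
  | succ n hn ih =>
    have hz : (1 : ℝ) ≤ (n : ℝ) + 1 := by linarith [n.cast_nonneg (α := ℝ)]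
    have hcoef : 0 ≤ 1 - 2 / ((n : ℝ) + 1 + 1) := by
      rw [sub_nonneg, div_le_one (by positivity)]
      linarith
    have h := he (n + 1) (by omega)
    push_cast at h ih ⊢
    calc e (n + 1 + 1)
        ≤ (1 - 2 / ((n : ℝ) + 1 + 1)) * e (n + 1) +
            K / (((n : ℝ) + 1 + 1) * Real.sqrt ((n : ℝ) + 1 + 1)) := h
      _ ≤ (1 - 2 / ((n : ℝ) + 1 + 1)) * (K / Real.sqrt ((n : ℝ) + 1)) +
            K / (((n : ℝ) + 1 + 1) * Real.sqrt ((n : ℝ) + 1 + 1)) := by gcongr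
      _ = K * ((1 - 2 / ((n : ℝ) + 1 + 1)) / Real.sqrt ((n : ℝ) + 1) +
            1 / (((n : ℝ) + 1 + 1) * Real.sqrt ((n : ℝ) + 1 + 1))) := by ring
      _ ≤ K * (1 / Real.sqrt ((n : ℝ) + 1 + 1)) := by gcongr; exact frankWolfe_rate_step hz
      _ = K / Real.sqrt ((n : ℝ) + 1 + 1) := by ring

lemma sqrt_mul_two_div_sq {x : ℝ} (hx : 0 < x) :
    Real.sqrt x * (2 / x) ^ 2 = 4 / (x * Real.sqrt x) := by
  have hs := Real.sq_sqrt hx.le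
  have hs₀ : 0 < Real.sqrt x := Real.sqrt_pos.mpr hx
  field_simp
  rw [hs]
  ring

theorem fwal_augmented_lagrangian_convergence_general
    {p d : ℕ}
    (C : Matrix (Fin p) (Fin p) ℝ)
    (A : Matrix (Fin p) (Fin p) ℝ →ₗ[ℝ] EuclideanSpace ℝ (Fin d))
    (Aadj : EuclideanSpace ℝ (Fin d) →ₗ[ℝ] Matrix (Fin p) (Fin p) ℝ)
    (hadj : ∀ (X : Matrix (Fin p) (Fin p) ℝ) (z : EuclideanSpace ℝ (Fin d)),
      (∑ i, A X i * z i) = frobInner (Aadj z) X)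
    (v : EuclideanSpace ℝ (Fin d))
    (β₀ : ℝ) (hβ₀ : 0 < β₀)
    (W : ℕ → Matrix (Fin p) (Fin p) ℝ)
    (y : ℕ → EuclideanSpace ℝ (Fin d))
    (H : ℕ → Matrix (Fin p) (Fin p) ℝ)
    (γ : ℕ → ℝ)
    (hW1 : W 1 ∈ CPdelta (Fin p))
    -- `H t` is a minimizer over `Δ^p` of `Z ↦ Tr (G_t Z)`, where
    -- `G_t = C + 𝒜ᵀ y_t + β_t 𝒜ᵀ (𝒜 W_t - v)` and `β_t = β₀ √(t+1)`
    (hHmem : ∀ t, 1 ≤ t → H t ∈ CPdelta (Fin p))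
    (hHmin : ∀ t, 1 ≤ t → ∀ Z ∈ CPdelta (Fin p),
      Matrix.trace
        ((C + Aadj (y t) + (β₀ * Real.sqrt ((t : ℝ) + 1)) • Aadj (A (W t) - v)) * H t) ≤
      Matrix.trace
        ((C + Aadj (y t) + (β₀ * Real.sqrt ((t : ℝ) + 1)) • Aadj (A (W t) - v)) * Z))
    -- primal update with step-size `η_t = 2/(t+1)`
    (hWupd : ∀ t, 1 ≤ t →
      W (t + 1) = (1 - 2 / ((t : ℝ) + 1)) • W t + (2 / ((t : ℝ) + 1)) • H t)
    -- dual step-size condition `γ_t ≥ 0`, `γ_t ‖g_t‖² ≤ β_t η_t² p² ‖𝒜‖²`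
    (hγ : ∀ t, 1 ≤ t →
      γ t * ‖A (W (t + 1)) - v‖ ^ 2 ≤
        (β₀ * Real.sqrt ((t : ℝ) + 1)) * (2 / ((t : ℝ) + 1)) ^ 2 * (p : ℝ) ^ 2 * opNorm A ^ 2)
    -- dual update `y_{t+1} = y_t + γ_t g_t` with `g_t = 𝒜 W_{t+1} - v`
    (hyupd : ∀ t, 1 ≤ t → y (t + 1) = y t + γ t • (A (W (t + 1)) - v))
    (Wstar : Matrix (Fin p) (Fin p) ℝ)
    (hWstar : Wstar ∈ CPdelta (Fin p)) (hfeas : A Wstar = v)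
    :
    ∀ t : ℕ, 1 ≤ t →
      Lag C A v (β₀ * Real.sqrt ((t : ℝ) + 1)) (W (t + 1)) (y (t + 1)) -
          Matrix.trace (C * Wstar) ≤
        6 * β₀ * opNorm A ^ 2 * (p : ℝ) ^ 2 / Real.sqrt ((t : ℝ) + 1) := by
  have hWmem := convex_CPdelta.frankWolfe_iterate_mem hW1 hHmem hWupd
  set e : ℕ → ℝ := fun t ↦ Lag C A v (β₀ * Real.sqrt t) (W t) (y t) - Matrix.trace (C * Wstar)
  have hrec : ∀ t : ℕ, 1 ≤ t → e (t + 1) ≤ (1 - 2 / ((t : ℝ) + 1)) * e t +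
      6 * β₀ * opNorm A ^ 2 * (p : ℝ) ^ 2 / (((t : ℝ) + 1) * Real.sqrt ((t : ℝ) + 1)) := by
    intro t ht
    have hgap := mul_le_mul_of_nonneg_left (sqrt_add_one_sub_sqrt_le t.cast_nonneg) hβ₀.le
    have hstep := Lag_fwal_step_sub_le hadj (β := β₀ * Real.sqrt t)
      (mul_le_mul_of_nonneg_left (Real.sqrt_le_sqrt (by linarith)) hβ₀.le)
      (by positivity) (by linarith) (hWmem t ht) (hHmem t ht) hWstar hfeas
      (hHmin t ht Wstar hWstar) (hWupd t ht) (hγ t ht) (hyupd t ht)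
    rw [mul_assoc β₀, sqrt_mul_two_div_sq (by positivity)] at hstep
    simp only [e, Nat.cast_add_one]
    convert hstep using 2
    ring
  intro t ht
  simpa [e] using le_div_sqrt_of_le_rate_recursion (by positivity) hrec t ht

/-- Convergence of the augmented Lagrangian value along FWAL.
For every `t ≥ 1`, `L_{β_t}(W_{t+1}; y_{t+1}) - Tr(C W⋆) ≤ 6 β₀ ‖𝒜‖² p² / √(t+1)`. -/
theorem fwal_augmented_lagrangian_convergence
    {p d : ℕ} (hp : 0 < p)
    (C : Matrix (Fin p) (Fin p) ℝ) (hC : C.IsSymm)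
    (A : Matrix (Fin p) (Fin p) ℝ →ₗ[ℝ] EuclideanSpace ℝ (Fin d))
    (Aadj : EuclideanSpace ℝ (Fin d) →ₗ[ℝ] Matrix (Fin p) (Fin p) ℝ)
    (hadj : ∀ (X : Matrix (Fin p) (Fin p) ℝ) (z : EuclideanSpace ℝ (Fin d)),
      (∑ i, A X i * z i) = frobInner (Aadj z) X)
    (v : EuclideanSpace ℝ (Fin d))
    (β₀ : ℝ) (hβ₀ : 0 < β₀)
    (W : ℕ → Matrix (Fin p) (Fin p) ℝ)
    (y : ℕ → EuclideanSpace ℝ (Fin d))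
    (H : ℕ → Matrix (Fin p) (Fin p) ℝ)
    (γ : ℕ → ℝ)
    (hW1 : W 1 ∈ CPdelta (Fin p))
    -- `H t` is a minimizer over `Δ^p` of `Z ↦ Tr (G_t Z)`, where
    -- `G_t = C + 𝒜ᵀ y_t + β_t 𝒜ᵀ (𝒜 W_t - v)` and `β_t = β₀ √(t+1)`
    (hHmem : ∀ t, 1 ≤ t → H t ∈ CPdelta (Fin p))
    (hHmin : ∀ t, 1 ≤ t → ∀ Z ∈ CPdelta (Fin p),
      Matrix.trace
        ((C + Aadj (y t) + (β₀ * Real.sqrt ((t : ℝ) + 1)) • Aadj (A (W t) - v)) * H t) ≤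
      Matrix.trace
        ((C + Aadj (y t) + (β₀ * Real.sqrt ((t : ℝ) + 1)) • Aadj (A (W t) - v)) * Z))
    -- primal update with step-size `η_t = 2/(t+1)`
    (hWupd : ∀ t, 1 ≤ t →
      W (t + 1) = (1 - 2 / ((t : ℝ) + 1)) • W t + (2 / ((t : ℝ) + 1)) • H t)
    -- dual step-size condition `γ_t ≥ 0`, `γ_t ‖g_t‖² ≤ β_t η_t² p² ‖𝒜‖²`
    (hγ0 : ∀ t, 1 ≤ t → 0 ≤ γ t)
    (hγ : ∀ t, 1 ≤ t →
      γ t * ‖A (W (t + 1)) - v‖ ^ 2 ≤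
        (β₀ * Real.sqrt ((t : ℝ) + 1)) * (2 / ((t : ℝ) + 1)) ^ 2 * (p : ℝ) ^ 2 * opNorm A ^ 2)
    -- dual update `y_{t+1} = y_t + γ_t g_t` with `g_t = 𝒜 W_{t+1} - v`
    (hyupd : ∀ t, 1 ≤ t → y (t + 1) = y t + γ t • (A (W (t + 1)) - v))
    (Wstar : Matrix (Fin p) (Fin p) ℝ)
    (hWstar : Wstar ∈ CPdelta (Fin p)) (hfeas : A Wstar = v)
    :
    ∀ t : ℕ, 1 ≤ t →
      Lag C A v (β₀ * Real.sqrt ((t : ℝ) + 1)) (W (t + 1)) (y (t + 1)) -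
          Matrix.trace (C * Wstar) ≤
        6 * β₀ * opNorm A ^ 2 * (p : ℝ) ^ 2 / Real.sqrt ((t : ℝ) + 1) :=
  fwal_augmented_lagrangian_convergence_general C A Aadj hadj v β₀ hβ₀ W y H γ hW1 hHmem hHmin hWupd
    hγ hyupd Wstar hWstar hfeas
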